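/- arXiv:2008.05778 — 5 statements merged into one kernel-verified Lean document; each statement's English description precedes it below -/
import Mathlib

section
/- There is an absolute constant C such that for all A > 0, all complex z with |z| ≤ A, and all integers n ≥ 1, |binom(n+z−1, n) − n^{z−1}/Γ(z)| ≤ C(A+1)^{CA} · n^{Re(z) − 2}. -/
/-!
Put `a n = n ^ (1 - z) * binom(n + z - 1, n)`, so that the claim is
`‖a n - 1 / Γ(z)‖ ≪ 1 / n`. Euler's limit formula gives `a n → 1 / Γ(z)`, and
`a (n + 1) / a n = (1 + z / n) (1 + 1 / n) ^ (-z) = 1 + O((‖z‖ + 1)² / n²)`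
once `n ≥ 2 (‖z‖ + 1)`. Hence beyond `N ≈ 4 (A + 1)²` the sequence stays within a bounded
factor of `a N`, and its distance to the limit is `O(‖a N‖ N / n)`. Below `N` the crude bound
`‖a n‖ ≤ (n + 1) ^ (2 (A + 1))` suffices. As `N` is polynomial in `A`, every constant is of the
form `(A + 1) ^ O(A)`.
-/

open Filter Topology

lemma exp_le_three_of_le_one {x : ℝ} (hx : x ≤ 1) : Real.exp x ≤ 3 :=
  (Real.exp_le_exp.mpr hx).trans (Real.exp_one_lt_d9.le.trans (by norm_num))

lemma rpow_le_mul_rpow_mul_of_le_two_pow {b A : ℝ} {k : ℕ} (hb : 1 ≤ b) (hbk : b ≤ 2 ^ k)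
    (hA : 0 ≤ A) : b ^ A ≤ b * (A + 1) ^ (k * A) := by
  rcases le_total A 1 with hA1 | hA1
  · calc b ^ A ≤ b ^ (1 : ℝ) := Real.rpow_le_rpow_of_exponent_le hb hA1
      _ = b * 1 := by rw [Real.rpow_one, mul_one]
      _ ≤ b * (A + 1) ^ (k * A) := by
          gcongr
          exact Real.one_le_rpow (by linarith) (by positivity)
  · calc b ^ A ≤ ((2 : ℝ) ^ k) ^ A := by gcongr
      _ = (2 : ℝ) ^ (k * A) := by rw [Real.rpow_natCast_mul zero_le_two]
      _ ≤ (A + 1) ^ (k * A) := by gcongr; linarith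
      _ ≤ b * (A + 1) ^ (k * A) := le_mul_of_one_le_left (by positivity) hb

lemma pow_le_two_pow_mul_rpow_mul {A : ℝ} (hA : 0 ≤ A) (k : ℕ) :
    (A + 1) ^ k ≤ 2 ^ k * (A + 1) ^ (k * A) := by
  rcases le_total A 1 with hA1 | hA1
  · calc (A + 1) ^ k ≤ 2 ^ k := by gcongr; linarith
      _ ≤ 2 ^ k * (A + 1) ^ (k * A) :=
          le_mul_of_one_le_right (by positivity) (Real.one_le_rpow (by linarith) (by positivity))
  · calc (A + 1) ^ k = (A + 1) ^ (k : ℝ) := (Real.rpow_natCast _ _).symm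
      _ ≤ (A + 1) ^ (k * A) :=
          Real.rpow_le_rpow_of_exponent_le (by linarith)
            (le_mul_of_one_le_right (by positivity) hA1)
      _ ≤ 2 ^ k * (A + 1) ^ (k * A) :=
          le_mul_of_one_le_left (by positivity) (one_le_pow₀ one_le_two)

lemma nine_mul_mul_rpow_le {A x : ℝ} (hA : 0 ≤ A) (hx : 0 ≤ x) (hxA : x + 1 ≤ 6 * (A + 1) ^ 2) :
    9 * x * (x + 1) ^ (2 * (A + 1)) ≤ 10 ^ 7 * (A + 1) ^ (10 ^ 7 * A) := by
  have ht : (0 : ℝ) < A + 1 := by linarith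
  have hsplit : (6 * (A + 1) ^ 2) ^ (2 * A + 3) =
      216 * (A + 1) ^ 6 * (36 ^ A * (A + 1) ^ (4 * A)) := by
    rw [Real.rpow_add (by positivity), show (2 : ℝ) * A = (2 : ℕ) * A by norm_num,
      Real.rpow_natCast_mul (by positivity), show (3 : ℝ) = (3 : ℕ) by norm_num, Real.rpow_natCast,
      show ((6 : ℝ) * (A + 1) ^ 2) ^ 2 = 36 * (A + 1) ^ 4 by ring,
      Real.mul_rpow (by norm_num) (by positivity), ← Real.rpow_natCast_mul ht.le]
    push_cast
    ring
  have h36 := rpow_le_mul_rpow_mul_of_le_two_pow (b := 36) (k := 6) (by norm_num) (by norm_num) hA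
  have h6 := pow_le_two_pow_mul_rpow_mul hA 6
  have hmerge : (A + 1) ^ ((6 : ℕ) * A) * (A + 1) ^ ((6 : ℕ) * A) * (A + 1) ^ (4 * A) =
      (A + 1) ^ (16 * A) := by
    rw [← Real.rpow_add ht, ← Real.rpow_add ht]
    push_cast
    ring_nf
  calc 9 * x * (x + 1) ^ (2 * (A + 1)) ≤ 9 * (x + 1) ^ (2 * A + 3) := by
        rw [show 2 * A + 3 = 2 * (A + 1) + 1 by ring, Real.rpow_add_one (by positivity)]
        nlinarith [Real.rpow_nonneg (show 0 ≤ x + 1 by positivity) (2 * (A + 1))]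
    _ ≤ 9 * (6 * (A + 1) ^ 2) ^ (2 * A + 3) := by gcongr
    _ = 9 * 216 * (A + 1) ^ 6 * 36 ^ A * (A + 1) ^ (4 * A) := by rw [hsplit]; ring
    _ ≤ 9 * 216 * (2 ^ 6 * (A + 1) ^ ((6 : ℕ) * A)) * (36 * (A + 1) ^ ((6 : ℕ) * A))
          * (A + 1) ^ (4 * A) := by gcongr
    _ = 4478976 * (A + 1) ^ (16 * A) := by rw [← hmerge]; ring
    _ ≤ 10 ^ 7 * (A + 1) ^ (10 ^ 7 * A) := by
        gcongr
        · norm_num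
        · linarith
        · nlinarith

section SlowlyVarying

variable {E : Type*} [SeminormedAddCommGroup E] {a : ℕ → E} {f : ℕ → ℝ} {n : ℕ}

lemma norm_le_mul_exp_of_norm_sub_le
    (h : ∀ m ≥ n, ‖a (m + 1) - a m‖ ≤ ‖a m‖ * (f m - f (m + 1))) :
    ∀ m ≥ n, ‖a m‖ ≤ ‖a n‖ * Real.exp (f n - f m) := by
  intro m hm
  induction m, hm using Nat.le_induction with
  | base => simp
  | succ m hm ih =>
    calc ‖a (m + 1)‖ ≤ ‖a m‖ + ‖a m‖ * (f m - f (m + 1)) :=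
          norm_le_norm_add_norm_sub' (a (m + 1)) (a m) |>.trans (add_le_add_right (h m hm) _)
      _ ≤ ‖a m‖ * Real.exp (f m - f (m + 1)) := by
          rw [← mul_one_add]
          gcongr
          linarith [Real.add_one_le_exp (f m - f (m + 1))]
      _ ≤ ‖a n‖ * Real.exp (f n - f m) * Real.exp (f m - f (m + 1)) := by gcongr
      _ = ‖a n‖ * Real.exp (f n - f (m + 1)) := by
          rw [mul_assoc, ← Real.exp_add, sub_add_sub_cancel]

lemma norm_sub_le_mul_exp_of_norm_sub_le
    (h : ∀ m ≥ n, ‖a (m + 1) - a m‖ ≤ ‖a m‖ * (f m - f (m + 1)))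
    (hf : ∀ m ≥ n, f (m + 1) ≤ f m) (hf₀ : ∀ m ≥ n, 0 ≤ f m) :
    ∀ m ≥ n, ‖a m - a n‖ ≤ ‖a n‖ * Real.exp (f n) * (f n - f m) := by
  intro m hm
  induction m, hm using Nat.le_induction with
  | base => simp
  | succ m hm ih =>
    have hgrowth : ‖a m‖ ≤ ‖a n‖ * Real.exp (f n) := by
      refine (norm_le_mul_exp_of_norm_sub_le h m hm).trans ?_
      gcongr
      linarith [hf₀ m hm]
    calc ‖a (m + 1) - a n‖ ≤ ‖a (m + 1) - a m‖ + ‖a m - a n‖ :=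
          norm_sub_le_norm_sub_add_norm_sub _ _ _
      _ ≤ ‖a n‖ * Real.exp (f n) * (f m - f (m + 1)) + ‖a n‖ * Real.exp (f n) * (f n - f m) := by
          gcongr
          · exact (h m hm).trans (by gcongr; linarith [hf m hm])
      _ = ‖a n‖ * Real.exp (f n) * (f n - f (m + 1)) := by ring

lemma norm_sub_le_mul_exp_of_tendsto {l : E} (hl : Tendsto a atTop (𝓝 l))
    (h : ∀ m ≥ n, ‖a (m + 1) - a m‖ ≤ ‖a m‖ * (f m - f (m + 1)))
    (hf : ∀ m ≥ n, f (m + 1) ≤ f m) (hf₀ : ∀ m ≥ n, 0 ≤ f m) :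
    ‖l - a n‖ ≤ ‖a n‖ * Real.exp (f n) * f n := by
  refine le_of_tendsto ((hl.sub_const (a n)).norm) ?_
  filter_upwards [eventually_ge_atTop n] with m hm
  refine (norm_sub_le_mul_exp_of_norm_sub_le h hf hf₀ m hm).trans ?_
  gcongr
  linarith [hf₀ m hm]

end SlowlyVarying

namespace Complex

noncomputable def multichoose (z : ℂ) (n : ℕ) : ℂ := (∏ i ∈ Finset.range n, (z + i)) / n.factorial

noncomputable def invGammaSeq (z : ℂ) (n : ℕ) : ℂ := (n : ℂ) ^ (1 - z) * multichoose z n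

lemma multichoose_succ (z : ℂ) (n : ℕ) :
    multichoose z (n + 1) = multichoose z n * ((z + n) / (n + 1)) := by
  simp only [multichoose, Finset.prod_range_succ, Nat.factorial_succ, Nat.cast_mul,
    Nat.cast_succ]
  field_simp

lemma norm_multichoose_le {A : ℝ} {z : ℂ} (hz : ‖z‖ ≤ A) (n : ℕ) :
    ‖multichoose z n‖ ≤ ((n : ℝ) + 1) ^ (A + 1) := by
  have hA : 0 ≤ A := (norm_nonneg z).trans hz
  induction n with
  | zero => simp [multichoose]
  | succ n ih =>
    have hn : (0 : ℝ) < n + 1 := by positivity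
    have hfactor : ‖(z + n) / (n + 1)‖ ≤ 1 + (A + 1) * (1 / ((n : ℝ) + 1)) := by
      have hnorm : ‖(n : ℂ) + 1‖ = n + 1 := by exact_mod_cast norm_natCast (n + 1)
      rw [norm_div, hnorm, div_le_iff₀ hn]
      calc ‖z + n‖ ≤ A + n := by simpa using norm_add_le_of_le hz (norm_natCast n).le
        _ ≤ _ := by field_simp; linarith
    -- Bernoulli: `1 + (A + 1) x ≤ (1 + x) ^ (A + 1)`, which telescopes to `(n + 1) ^ (A + 1)`.
    have hbern := one_add_mul_self_le_rpow_one_add (s := 1 / ((n : ℝ) + 1)) (by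
      have : (0 : ℝ) ≤ 1 / ((n : ℝ) + 1) := by positivity
      linarith) (p := A + 1) (by linarith)
    calc ‖multichoose z (n + 1)‖
        ≤ ((n : ℝ) + 1) ^ (A + 1) * (1 + 1 / ((n : ℝ) + 1)) ^ (A + 1) := by
          rw [multichoose_succ, norm_mul]
          gcongr
          exact hfactor.trans hbern
      _ = (((n + 1 : ℕ) : ℝ) + 1) ^ (A + 1) := by
          rw [← Real.mul_rpow hn.le (by positivity)]
          congr 1
          field_simp
          push_cast
          ring

lemma tendsto_inv_GammaSeq (z : ℂ) :
    Tendsto (fun n ↦ (GammaSeq z n)⁻¹) atTop (𝓝 (Gamma z)⁻¹) := by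
  by_cases hG : Gamma z = 0
  · obtain ⟨k, rfl⟩ := (Gamma_eq_zero_iff z).mp hG
    rw [hG, inv_zero]
    refine tendsto_const_nhds.congr' ?_
    filter_upwards [eventually_ge_atTop k] with n hn
    rw [GammaSeq, Finset.prod_eq_zero (Finset.mem_range.mpr (Nat.lt_succ_of_le hn))
      (neg_add_cancel _), div_zero, inv_zero]
  · exact (GammaSeq_tendsto_Gamma z).inv₀ hG

lemma invGammaSeq_eq_div_mul_inv_GammaSeq {z : ℂ} {n : ℕ} (hn : n ≠ 0) (hzn : (n : ℂ) + z ≠ 0) :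
    invGammaSeq z n = n / (n + z) * (GammaSeq z n)⁻¹ := by
  have hn' : (n : ℂ) ≠ 0 := Nat.cast_ne_zero.mpr hn
  rw [invGammaSeq, multichoose, GammaSeq, inv_div, Finset.prod_range_succ,
    cpow_sub _ _ hn', cpow_one]
  field_simp
  ring

lemma tendsto_invGammaSeq (z : ℂ) : Tendsto (invGammaSeq z) atTop (𝓝 (Gamma z)⁻¹) := by
  have hlim := (tendsto_natCast_div_add_atTop z).mul (tendsto_inv_GammaSeq z)
  rw [one_mul] at hlim
  refine hlim.congr' ?_
  filter_upwards [eventually_gt_atTop ⌊‖z‖⌋₊] with n hn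
  have hzn : (n : ℂ) + z ≠ 0 := by
    intro h
    have : ‖z‖ = n := by rw [eq_neg_of_add_eq_zero_right h, norm_neg, norm_natCast]
    exact (Nat.floor_lt (norm_nonneg z)).mp hn |>.ne this
  exact (invGammaSeq_eq_div_mul_inv_GammaSeq (by omega) hzn).symm

lemma norm_log_one_add_sub_self_le_sq {w : ℂ} (hw : ‖w‖ ≤ 1 / 2) :
    ‖log (1 + w) - w‖ ≤ ‖w‖ ^ 2 := by
  calc ‖log (1 + w) - w‖ ≤ ‖w‖ ^ 2 * (1 - ‖w‖)⁻¹ / 2 :=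
        norm_log_one_add_sub_self_le (hw.trans_lt one_half_lt_one)
    _ ≤ ‖w‖ ^ 2 * 2 / 2 := by
        gcongr
        rw [inv_le_comm₀ (by linarith) two_pos]
        linarith
    _ = ‖w‖ ^ 2 := by ring

lemma one_add_ne_zero_of_norm_lt_one {w : ℂ} (hw : ‖w‖ < 1) : 1 + w ≠ 0 := by
  intro h
  rw [eq_neg_of_add_eq_zero_right h, norm_neg, norm_one] at hw
  exact hw.false

lemma norm_one_add_mul_mul_cpow_neg_sub_one_le {z w : ℂ} (hw : 2 * (‖z‖ + 1) * ‖w‖ ≤ 1) :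
    ‖(1 + z * w) * (1 + w) ^ (-z) - 1‖ ≤ 2 * ((‖z‖ + 1) * ‖w‖) ^ 2 := by
  have hzw : ‖z * w‖ ≤ 1 / 2 := by
    rw [norm_mul]; nlinarith [norm_nonneg z, norm_nonneg w]
  have hw' : ‖w‖ ≤ 1 / 2 := by nlinarith [norm_nonneg z, norm_nonneg w]
  set L := (log (1 + z * w) - z * w) - z * (log (1 + w) - w)
  have hexp : (1 + z * w) * (1 + w) ^ (-z) = exp L := by
    rw [cpow_def_of_ne_zero (one_add_ne_zero_of_norm_lt_one (hw'.trans_lt one_half_lt_one)),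
      ← exp_log (one_add_ne_zero_of_norm_lt_one (hzw.trans_lt one_half_lt_one)), ← exp_add]
    congr 1
    ring
  have hL : ‖L‖ ≤ ((‖z‖ + 1) * ‖w‖) ^ 2 :=
    calc ‖L‖ ≤ ‖z * w‖ ^ 2 + ‖z‖ * ‖w‖ ^ 2 := by
          refine (norm_sub_le _ _).trans (add_le_add (norm_log_one_add_sub_self_le_sq hzw) ?_)
          rw [norm_mul]
          gcongr
          exact norm_log_one_add_sub_self_le_sq hw'
      _ ≤ ((‖z‖ + 1) * ‖w‖) ^ 2 := by
          rw [norm_mul]; nlinarith [norm_nonneg z, sq_nonneg ‖w‖]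
  have hL1 : ‖L‖ ≤ 1 := hL.trans (by
    have : (‖z‖ + 1) * ‖w‖ ≤ 1 / 2 := by linarith
    nlinarith [mul_nonneg (add_nonneg (norm_nonneg z) zero_le_one) (norm_nonneg w)])
  rw [hexp]
  exact (norm_exp_sub_one_le hL1).trans (by linarith)

lemma invGammaSeq_succ (z : ℂ) {m : ℕ} (hm : m ≠ 0) :
    invGammaSeq z (m + 1) = invGammaSeq z m * ((1 + z * (m : ℂ)⁻¹) * (1 + (m : ℂ)⁻¹) ^ (-z)) := by
  have hm' : (0 : ℝ) < m := by exact_mod_cast Nat.pos_of_ne_zero hm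
  have hsplit : ((m + 1 : ℕ) : ℂ) = ((m : ℝ) : ℂ) * ((1 + (m : ℝ)⁻¹ : ℝ) : ℂ) := by
    push_cast
    field_simp
  have hne : (1 + (m : ℂ)⁻¹) ≠ 0 := by
    have := ofReal_ne_zero.mpr (show (1 + (m : ℝ)⁻¹) ≠ 0 by positivity)
    push_cast at this
    exact this
  rw [invGammaSeq, invGammaSeq, multichoose_succ, hsplit,
    mul_cpow_ofReal_nonneg hm'.le (by positivity)]
  push_cast
  rw [sub_eq_add_neg, cpow_add _ _ hne, cpow_one]
  field_simp
  ring

lemma norm_invGammaSeq_succ_sub_le {A : ℝ} {z : ℂ} (hz : ‖z‖ ≤ A) {n : ℕ}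
    (hn : 2 * (A + 1) ≤ n) : ∀ m ≥ n, ‖invGammaSeq z (m + 1) - invGammaSeq z m‖ ≤
      ‖invGammaSeq z m‖ * (4 * (A + 1) ^ 2 / m - 4 * (A + 1) ^ 2 / (m + 1 : ℕ)) := by
  intro m hnm
  have hA : 0 ≤ A := (norm_nonneg z).trans hz
  have hm : 2 * (A + 1) ≤ m := hn.trans (by exact_mod_cast hnm)
  have hm' : (0 : ℝ) < m := by linarith
  have hnorm : ‖(m : ℂ)⁻¹‖ = (m : ℝ)⁻¹ := by rw [norm_inv, norm_natCast]
  have hρ := norm_one_add_mul_mul_cpow_neg_sub_one_le (z := z) (w := (m : ℂ)⁻¹) (by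
    rw [hnorm, ← div_eq_mul_inv, div_le_one hm']
    linarith)
  rw [invGammaSeq_succ z (Nat.cast_pos.mp hm').ne', ← mul_sub_one, norm_mul]
  gcongr
  calc _ ≤ 2 * ((‖z‖ + 1) * ‖(m : ℂ)⁻¹‖) ^ 2 := hρ
    _ ≤ 2 * ((A + 1) * (m : ℝ)⁻¹) ^ 2 := by rw [hnorm]; gcongr
    _ ≤ 4 * (A + 1) ^ 2 / m - 4 * (A + 1) ^ 2 / (m + 1 : ℕ) := by
        push_cast
        rw [div_sub_div _ _ hm'.ne' (by positivity), le_div_iff₀ (by positivity)]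
        field_simp
        nlinarith

lemma norm_invGammaSeq_le {A : ℝ} {z : ℂ} (hz : ‖z‖ ≤ A) {n : ℕ} (hn : n ≠ 0) :
    ‖invGammaSeq z n‖ ≤ ((n : ℝ) + 1) ^ (2 * (A + 1)) := by
  have hn' : (1 : ℝ) ≤ n := Nat.one_le_cast.mpr (Nat.one_le_iff_ne_zero.mpr hn)
  have hre : -A ≤ z.re := by linarith [neg_abs_le z.re, abs_re_le_norm z]
  have hpow : ‖(n : ℂ) ^ (1 - z)‖ ≤ ((n : ℝ) + 1) ^ (A + 1) := by
    rw [norm_natCast_cpow_of_pos (Nat.pos_of_ne_zero hn), sub_re, one_re]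
    calc (n : ℝ) ^ (1 - z.re) ≤ (n : ℝ) ^ (A + 1) :=
          Real.rpow_le_rpow_of_exponent_le hn' (by linarith)
      _ ≤ ((n : ℝ) + 1) ^ (A + 1) := by gcongr <;> linarith [(norm_nonneg z).trans hz]
  rw [invGammaSeq, norm_mul, two_mul, Real.rpow_add (by positivity)]
  exact mul_le_mul hpow (norm_multichoose_le hz n) (norm_nonneg _) (by positivity)

section LargeIndex

variable {A : ℝ} {z : ℂ} {n : ℕ}

lemma norm_invGammaSeq_le_three_mul (hz : ‖z‖ ≤ A) (hn : 4 * (A + 1) ^ 2 ≤ n) {m : ℕ}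
    (hnm : n ≤ m) : ‖invGammaSeq z m‖ ≤ 3 * ‖invGammaSeq z n‖ := by
  have hA : 0 ≤ A := (norm_nonneg z).trans hz
  have hn₀ : (0 : ℝ) < n := by nlinarith
  have hm₀ : (0 : ℝ) < m := hn₀.trans_le (by exact_mod_cast hnm)
  calc ‖invGammaSeq z m‖
      ≤ ‖invGammaSeq z n‖ * Real.exp (4 * (A + 1) ^ 2 / n - 4 * (A + 1) ^ 2 / m) :=
        norm_le_mul_exp_of_norm_sub_le (f := fun m : ℕ ↦ 4 * (A + 1) ^ 2 / m)
          (norm_invGammaSeq_succ_sub_le hz (by nlinarith)) m hnm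
    _ ≤ ‖invGammaSeq z n‖ * 3 := by
        gcongr
        refine exp_le_three_of_le_one ?_
        have : 0 ≤ 4 * (A + 1) ^ 2 / m := by positivity
        linarith [(div_le_one hn₀).mpr hn]
    _ = 3 * ‖invGammaSeq z n‖ := mul_comm _ _

lemma norm_inv_Gamma_sub_invGammaSeq_le (hz : ‖z‖ ≤ A) (hn : 4 * (A + 1) ^ 2 ≤ n) :
    ‖(Gamma z)⁻¹ - invGammaSeq z n‖ ≤ 3 * ‖invGammaSeq z n‖ * (4 * (A + 1) ^ 2 / n) := by
  have hA : 0 ≤ A := (norm_nonneg z).trans hz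
  have hn₀ : (0 : ℝ) < n := by nlinarith
  calc ‖(Gamma z)⁻¹ - invGammaSeq z n‖
      ≤ ‖invGammaSeq z n‖ * Real.exp (4 * (A + 1) ^ 2 / n) * (4 * (A + 1) ^ 2 / n) :=
        norm_sub_le_mul_exp_of_tendsto (f := fun m : ℕ ↦ 4 * (A + 1) ^ 2 / m)
          (tendsto_invGammaSeq z) (norm_invGammaSeq_succ_sub_le hz (by nlinarith))
          (fun k hk ↦ by
            have : (0 : ℝ) < k := hn₀.trans_le (by exact_mod_cast hk)
            gcongr
            linarith)
          (fun k _ ↦ by positivity)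
    _ ≤ ‖invGammaSeq z n‖ * 3 * (4 * (A + 1) ^ 2 / n) := by
        gcongr
        exact exp_le_three_of_le_one ((div_le_one hn₀).mpr hn)
    _ = 3 * ‖invGammaSeq z n‖ * (4 * (A + 1) ^ 2 / n) := by ring

end LargeIndex

lemma norm_invGammaSeq_sub_inv_Gamma_le {A : ℝ} {z : ℂ} (hz : ‖z‖ ≤ A) {N : ℕ}
    (hN : 4 * (A + 1) ^ 2 ≤ N) {n : ℕ} (hn : n ≠ 0) :
    ‖invGammaSeq z n - (Gamma z)⁻¹‖ ≤ 9 * N * ((N : ℝ) + 1) ^ (2 * (A + 1)) / n := by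
  have hA : 0 ≤ A := (norm_nonneg z).trans hz
  have hN₀ : (0 : ℝ) < N := by nlinarith
  have hn₀ : (0 : ℝ) < n := by exact_mod_cast Nat.pos_of_ne_zero hn
  set B := ((N : ℝ) + 1) ^ (2 * (A + 1))
  have haN : ‖invGammaSeq z N‖ ≤ B := norm_invGammaSeq_le hz (by exact_mod_cast hN₀.ne')
  rcases le_or_gt N n with hNn | hnN
  · have hKn : 4 * (A + 1) ^ 2 ≤ n := hN.trans (by exact_mod_cast hNn)
    calc ‖invGammaSeq z n - (Gamma z)⁻¹‖ = ‖(Gamma z)⁻¹ - invGammaSeq z n‖ := norm_sub_rev _ _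
      _ ≤ 3 * ‖invGammaSeq z n‖ * (4 * (A + 1) ^ 2 / n) := norm_inv_Gamma_sub_invGammaSeq_le hz hKn
      _ ≤ 3 * (3 * B) * (N / n) := by
          gcongr
          exact (norm_invGammaSeq_le_three_mul hz hN hNn).trans (by gcongr)
      _ = 9 * N * B / n := by ring
  · have hΓ : ‖(Gamma z)⁻¹‖ ≤ 4 * B :=
      calc ‖(Gamma z)⁻¹‖ ≤ ‖(Gamma z)⁻¹ - invGammaSeq z N‖ + ‖invGammaSeq z N‖ :=
            norm_le_norm_sub_add _ _
        _ ≤ 3 * ‖invGammaSeq z N‖ * 1 + ‖invGammaSeq z N‖ := by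
            gcongr
            exact (norm_inv_Gamma_sub_invGammaSeq_le hz hN).trans
              (by gcongr; exact (div_le_one hN₀).mpr hN)
        _ ≤ 4 * B := by linarith
    have han : ‖invGammaSeq z n‖ ≤ B := by
      refine (norm_invGammaSeq_le hz hn).trans
        (Real.rpow_le_rpow (by positivity) ?_ (by positivity))
      have : (n : ℝ) ≤ N := by exact_mod_cast hnN.le
      linarith
    have hB : 0 ≤ B := by positivity
    calc ‖invGammaSeq z n - (Gamma z)⁻¹‖ ≤ ‖invGammaSeq z n‖ + ‖(Gamma z)⁻¹‖ := norm_sub_le _ _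
      _ ≤ 9 * B * 1 := by linarith
      _ ≤ 9 * B * (N / n) := by
          gcongr
          rw [le_div_iff₀ hn₀, one_mul]
          exact_mod_cast hnN.le
      _ = 9 * N * B / n := by ring

lemma norm_multichoose_sub_cpow_div_Gamma_eq {z : ℂ} {n : ℕ} (hn : n ≠ 0) :
    ‖multichoose z n - (n : ℂ) ^ (z - 1) / Gamma z‖ =
      (n : ℝ) ^ (z.re - 1) * ‖invGammaSeq z n - (Gamma z)⁻¹‖ := by
  have hcpow : (n : ℂ) ^ (z - 1) * (n : ℂ) ^ (1 - z) = 1 := by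
    rw [← cpow_add _ _ (Nat.cast_ne_zero.mpr hn), sub_add_sub_cancel', sub_self, cpow_zero]
  rw [show z.re - 1 = (z - 1).re by simp, ← norm_natCast_cpow_of_pos (Nat.pos_of_ne_zero hn),
    ← norm_mul, invGammaSeq, mul_sub, ← mul_assoc, hcpow, one_mul, div_eq_mul_inv]

end Complex

/-- There is an absolute constant `C` such that for all `A > 0`, `|z| ≤ A` and `n ≥ 1`,
`|binom(n+z−1, n) − n^{z−1}/Γ(z)| ≤ C(A+1)^{CA} n^{Re z − 2}`, where
`binom(n+z−1,n) = z(z+1)⋯(z+n−1)/n!`. -/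
theorem binom_approx_gamma :
    ∃ C : ℝ, 0 < C ∧ ∀ A : ℝ, 0 < A → ∀ z : ℂ, ‖z‖ ≤ A → ∀ n : ℕ, 1 ≤ n →
      ‖(∏ i ∈ Finset.range n, (z + i)) / (n.factorial : ℂ)
          - (n : ℂ) ^ (z - 1) / Complex.Gamma z‖
        ≤ C * (A + 1) ^ (C * A) * (n : ℝ) ^ (z.re - 2) := by
  refine ⟨10 ^ 7, by norm_num, fun A hA z hz n hn ↦ ?_⟩
  have hn₀ : (0 : ℝ) < n := by exact_mod_cast hn
  set N := ⌈4 * (A + 1) ^ 2⌉₊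
  have hN : 4 * (A + 1) ^ 2 ≤ N := Nat.le_ceil _
  have hN' : (N : ℝ) + 1 ≤ 6 * (A + 1) ^ 2 := by
    have := Nat.ceil_lt_add_one (show (0 : ℝ) ≤ 4 * (A + 1) ^ 2 by positivity)
    nlinarith
  calc ‖z.multichoose n - (n : ℂ) ^ (z - 1) / Complex.Gamma z‖
      = (n : ℝ) ^ (z.re - 1) * ‖z.invGammaSeq n - (Complex.Gamma z)⁻¹‖ :=
        Complex.norm_multichoose_sub_cpow_div_Gamma_eq (by omega)
    _ ≤ (n : ℝ) ^ (z.re - 1) * (9 * N * ((N : ℝ) + 1) ^ (2 * (A + 1)) / n) := by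
        gcongr
        exact Complex.norm_invGammaSeq_sub_inv_Gamma_le hz hN (by omega)
    _ = 9 * N * ((N : ℝ) + 1) ^ (2 * (A + 1)) * (n : ℝ) ^ (z.re - 2) := by
        rw [show z.re - 2 = z.re - 1 + -1 by ring, Real.rpow_add hn₀, Real.rpow_neg_one]
        ring
    _ ≤ 10 ^ 7 * (A + 1) ^ (10 ^ 7 * A) * (n : ℝ) ^ (z.re - 2) :=
        mul_le_mul_of_nonneg_right (nine_mul_mul_rpow_le hA.le (Nat.cast_nonneg N) hN')
          (by positivity)
end

section
/- Let q ≥ 2 be a prime power and x a real number with 1 ≤ x < q. Then h_q(x) := ∏_{P} (1 − x/|P|)^{−1} (1 − 1/|P|)^x, the product over all monic irreducible polynomials P over F_q with |P| = q^{deg P}, satisfies h_q(x) ≥ 1 + (x−1)/(2q); in particular h_q(x) ≥ 1. -/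
/-!
Each local factor `(1 - x u)⁻¹ (1 - u) ^ x`, `u = 1/|P|`, has logarithm between `(x - 1) u² / 2`
and `O(u²)`. The upper bound makes the logarithms summable, as there are at most `q ^ d` monic
polynomials of degree `d`, so `h_q(x) = exp (∑_P log (factor at P))`; the lower bound shows that
all terms are nonnegative, so the sum is at least the contribution `q · (x - 1) / (2 q²)` of the
`q` linear polynomials. Finally `exp y ≥ 1 + y`.
-/

open Polynomial Real

/-- The factor of `h_q(x)` at `P`, written in the variable `u = 1 / |P|`. -/
noncomputable def eulerFactor (x u : ℝ) : ℝ := (1 - x * u)⁻¹ * (1 - u) ^ x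

section EulerFactor

variable {x u : ℝ}

lemma eulerFactor_pos (hu : u < 1) (hxu : x * u < 1) : 0 < eulerFactor x u :=
  mul_pos (inv_pos.2 (sub_pos.2 hxu)) (rpow_pos_of_pos (sub_pos.2 hu) x)

lemma log_eulerFactor (hu : u < 1) (hxu : x * u < 1) :
    log (eulerFactor x u) = x * log (1 - u) - log (1 - x * u) := by
  rw [eulerFactor, log_mul (inv_pos.2 (sub_pos.2 hxu)).ne' (rpow_pos_of_pos (sub_pos.2 hu) x).ne',
    log_inv, log_rpow (sub_pos.2 hu)]
  ring

lemma log_eulerFactor_le (hx : 0 ≤ x) (hu : u < 1) (hxu : x * u < 1) :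
    log (eulerFactor x u) ≤ (x * u) ^ 2 / (1 - x * u) := by
  have hlog_u : log (1 - u) ≤ -u := by linarith [log_le_sub_one_of_pos (sub_pos.2 hu)]
  have hlog_xu : -log (1 - x * u) ≤ (1 - x * u)⁻¹ - 1 := by
    simpa only [log_inv] using log_le_sub_one_of_pos (inv_pos.2 (sub_pos.2 hxu))
  have hsplit : (x * u) ^ 2 / (1 - x * u) = -(x * u) + ((1 - x * u)⁻¹ - 1) := by
    field_simp [(sub_pos.2 hxu).ne']
    ring
  rw [log_eulerFactor hu hxu, hsplit]
  nlinarith [mul_le_mul_of_nonneg_left hlog_u hx]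

lemma sq_div_two_le_log_one_sub_add_div (hu0 : 0 ≤ u) (hu : u < 1) :
    u ^ 2 / 2 ≤ log (1 - u) + u / (1 - u) := by
  -- `|u + u²/2 + log (1 - u)| ≤ u³/(1 - u)`
  have htaylor := abs_log_sub_add_sum_range_le (x := u) (by rwa [abs_of_nonneg hu0]) 2
  simp only [Finset.sum_range_succ, Finset.sum_range_zero, abs_of_nonneg hu0] at htaylor
  have hsplit : u / (1 - u) = u + u ^ 2 + u ^ (2 + 1) / (1 - u) := by
    field_simp [(sub_pos.2 hu).ne']
    ring
  rw [hsplit]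
  norm_num at htaylor ⊢
  linarith [(abs_le.1 htaylor).1]

lemma sub_one_mul_div_le_log_sub_log (hu : u < 1) (hxu : x * u < 1) :
    (x - 1) * u / (1 - u) ≤ log (1 - u) - log (1 - x * u) := by
  have h := log_le_sub_one_of_pos (div_pos (sub_pos.2 hxu) (sub_pos.2 hu))
  rw [log_div (sub_pos.2 hxu).ne' (sub_pos.2 hu).ne'] at h
  have hsplit : (1 - x * u) / (1 - u) - 1 = -((x - 1) * u / (1 - u)) := by
    field_simp [(sub_pos.2 hu).ne']
    ring
  linarith

lemma log_eulerFactor_ge (hx : 1 ≤ x) (hu0 : 0 ≤ u) (hxu : x * u < 1) :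
    (x - 1) * u ^ 2 / 2 ≤ log (eulerFactor x u) := by
  have hu : u < 1 := by nlinarith
  have hquad := mul_le_mul_of_nonneg_left (sq_div_two_le_log_one_sub_add_div hu0 hu)
    (sub_nonneg.2 hx)
  have hdiv : (x - 1) * u / (1 - u) = (x - 1) * (u / (1 - u)) := mul_div_assoc _ _ _
  rw [log_eulerFactor hu hxu]
  linarith [sub_one_mul_div_le_log_sub_log hu hxu]

lemma log_eulerFactor_nonneg (hx : 1 ≤ x) (hu0 : 0 ≤ u) (hxu : x * u < 1) :
    0 ≤ log (eulerFactor x u) :=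
  le_trans (by have := sub_nonneg.2 hx; positivity) (log_eulerFactor_ge hx hu0 hxu)

end EulerFactor

namespace Polynomial

variable {R : Type*} [Semiring R]

lemma Monic.eq_of_natDegree_eq_of_coeff_eq {p q : R[X]} (hp : p.Monic) (hq : q.Monic)
    (hdeg : p.natDegree = q.natDegree) (hcoeff : ∀ n < p.natDegree, p.coeff n = q.coeff n) :
    p = q := by
  ext n
  rcases lt_trichotomy n p.natDegree with hn | rfl | hn
  · exact hcoeff n hn
  · rw [hp.coeff_natDegree, hdeg, hq.coeff_natDegree]
  · rw [coeff_eq_zero_of_natDegree_lt hn, coeff_eq_zero_of_natDegree_lt (hdeg ▸ hn)]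

lemma summable_pow_natDegree_monic [Fintype R] {r : ℝ} (hr : 0 ≤ r)
    (hRr : Fintype.card R * r < 1) :
    Summable fun p : {p : R[X] // p.Monic} => r ^ p.1.natDegree := by
  let e : {p : R[X] // p.Monic} → Σ d : ℕ, (Fin d → R) :=
    fun p => ⟨p.1.natDegree, fun i => p.1.coeff i⟩
  have he : Function.Injective e := by
    rintro ⟨p, hp⟩ ⟨q, hq⟩ h
    have hdeg : p.natDegree = q.natDegree := congrArg Sigma.fst h
    refine Subtype.ext (hp.eq_of_natDegree_eq_of_coeff_eq hq hdeg fun n hn => ?_)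
    simpa [e, hn, hdeg ▸ hn] using
      congrArg (fun s : Σ d : ℕ, (Fin d → R) => if h : n < s.1 then s.2 ⟨n, h⟩ else 0) h
  have hsigma : Summable fun s : Σ d : ℕ, (Fin d → R) => r ^ s.1 := by
    refine (summable_sigma_of_nonneg fun _ => by positivity).2
      ⟨fun d => (hasSum_fintype _).summable, ?_⟩
    have hterm : ∀ d : ℕ, ∑' _ : Fin d → R, r ^ d = (Fintype.card R * r) ^ d := fun d => by
      rw [tsum_fintype, Finset.sum_const, Finset.card_univ, Fintype.card_fun, Fintype.card_fin,
        nsmul_eq_mul, Nat.cast_pow, mul_pow]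
    simp only [hterm]
    exact summable_geometric_of_lt_one (by positivity) hRr
  exact (hsigma.comp_injective he).congr fun _ => rfl

end Polynomial

lemma summable_log_eulerFactor {ι : Type*} {x c : ℝ} {u : ι → ℝ} (hx : 1 ≤ x)
    (hu0 : ∀ i, 0 ≤ u i) (huc : ∀ i, u i ≤ c) (hxc : x * c < 1)
    (hsq : Summable fun i => u i ^ 2) :
    Summable fun i => log (eulerFactor x (u i)) := by
  have hxu : ∀ i, x * u i < 1 := fun i =>
    (mul_le_mul_of_nonneg_left (huc i) (by linarith)).trans_lt hxc
  refine Summable.of_nonneg_of_le (fun i => ?_) (fun i => ?_) (hsq.mul_left (x ^ 2 / (1 - x * c)))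
  · exact log_eulerFactor_nonneg hx (hu0 i) (hxu i)
  · calc log (eulerFactor x (u i)) ≤ (x * u i) ^ 2 / (1 - x * u i) :=
          log_eulerFactor_le (by linarith) (by nlinarith [hxu i]) (hxu i)
      _ ≤ (x * u i) ^ 2 / (1 - x * c) := by
          gcongr
          exact huc i
      _ = x ^ 2 / (1 - x * c) * u i ^ 2 := by ring

section FiniteField

variable (F : Type*) [Field F] [Fintype F]

lemma one_div_card_pow_natDegree_le {P : F[X]} (hP : Irreducible P) :
    1 / (Fintype.card F : ℝ) ^ P.natDegree ≤ 1 / Fintype.card F :=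
  one_div_le_one_div_of_le (by exact_mod_cast Fintype.card_pos)
    (le_self_pow₀ (by exact_mod_cast Fintype.card_pos) hP.natDegree_pos.ne')

lemma summable_sq_one_div_card_pow_natDegree :
    Summable fun P : {f : F[X] // f.Monic ∧ Irreducible f} =>
      (1 / (Fintype.card F : ℝ) ^ P.1.natDegree) ^ 2 := by
  have hq : (1 : ℝ) < Fintype.card F := by exact_mod_cast Fintype.one_lt_card
  have hmonic := summable_pow_natDegree_monic (R := F) (r := (1 / Fintype.card F) ^ 2)
    (by positivity) (by field_simp; exact hq)
  refine (hmonic.comp_injective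
    (Subtype.map_injective (fun _ hP => hP.1) Function.injective_id)).congr fun P => ?_
  simp only [Function.comp_apply, Subtype.map_coe, id, one_div_pow, ← pow_mul, mul_comm]

variable {F} in
lemma one_add_le_tprod_eulerFactor {x : ℝ} (hx : 1 ≤ x) (hxq : x < Fintype.card F) :
    1 + (x - 1) / (2 * Fintype.card F) ≤ ∏' P : {f : F[X] // f.Monic ∧ Irreducible f},
      eulerFactor x (1 / (Fintype.card F : ℝ) ^ P.1.natDegree) := by
  set q : ℝ := (Fintype.card F : ℝ)
  have hq : 0 < q := by linarith
  have hxq' : x * (1 / q) < 1 := by rwa [mul_one_div, div_lt_one hq]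
  have hxu : ∀ P : {f : F[X] // f.Monic ∧ Irreducible f}, x * (1 / q ^ P.1.natDegree) < 1 :=
    fun P => (mul_le_mul_of_nonneg_left (one_div_card_pow_natDegree_le F P.2.2)
      (by linarith)).trans_lt hxq'
  have hsum := summable_log_eulerFactor hx (fun P => by positivity)
    (fun P => one_div_card_pow_natDegree_le F P.2.2) hxq'
    (summable_sq_one_div_card_pow_natDegree F)
  rw [← rexp_tsum_eq_tprod (fun P => eulerFactor_pos (by nlinarith [hxu P]) (hxu P)) hsum]
  let linear : F → {f : F[X] // f.Monic ∧ Irreducible f} :=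
    fun a => ⟨X - C a, monic_X_sub_C a, irreducible_X_sub_C a⟩
  have hlinear : Function.Injective linear := fun a b h => by
    simpa [linear] using congrArg (fun P => P.1.coeff 0) h
  have hlog_linear :
      (x - 1) / (2 * q) ≤ ∑ a : F, log (eulerFactor x (1 / q ^ (linear a).1.natDegree)) :=
    calc (x - 1) / (2 * q) = ∑ _a : F, (x - 1) * (1 / q) ^ 2 / 2 := by
          rw [Finset.sum_const, Finset.card_univ, nsmul_eq_mul]
          field_simp
          rfl
      _ ≤ ∑ a : F, log (eulerFactor x (1 / q ^ (linear a).1.natDegree)) :=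
          Finset.sum_le_sum fun a _ => by
            simpa [linear] using log_eulerFactor_ge hx (by positivity) hxq'
  have hlinear_le : ∑ a : F, log (eulerFactor x (1 / q ^ (linear a).1.natDegree)) ≤
      ∑' P : {f : F[X] // f.Monic ∧ Irreducible f},
        log (eulerFactor x (1 / q ^ P.1.natDegree)) :=
    (tsum_fintype _).symm.trans_le (tsum_comp_le_tsum_of_inj hsum
      (fun P => log_eulerFactor_nonneg hx (by positivity) (hxu P)) hlinear)
  calc 1 + (x - 1) / (2 * q) ≤ exp ((x - 1) / (2 * q)) := by
        linarith [add_one_le_exp ((x - 1) / (2 * q))]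
    _ ≤ _ := exp_le_exp.2 (hlog_linear.trans hlinear_le)

end FiniteField

theorem hq_lower_bound_general (F : Type*) [Field F] [Fintype F] (x : ℝ)
    (hx1 : 1 ≤ x) (hxq : x < Fintype.card F) :
    1 + (x - 1) / (2 * Fintype.card F)
        ≤ (∏' P : {f : F[X] // f.Monic ∧ Irreducible f},
            (1 - x / (Fintype.card F : ℝ) ^ P.1.natDegree)⁻¹ *
              (1 - 1 / (Fintype.card F : ℝ) ^ P.1.natDegree) ^ x) ∧
      1 ≤ (∏' P : {f : F[X] // f.Monic ∧ Irreducible f},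
            (1 - x / (Fintype.card F : ℝ) ^ P.1.natDegree)⁻¹ *
              (1 - 1 / (Fintype.card F : ℝ) ^ P.1.natDegree) ^ x) := by
  have hbound := one_add_le_tprod_eulerFactor hx1 hxq
  simp only [eulerFactor, mul_one_div] at hbound
  refine ⟨hbound, le_trans (le_add_of_nonneg_right ?_) hbound⟩
  exact div_nonneg (sub_nonneg.2 hx1) (by positivity)

/-- For `1 ≤ x < q`, `h_q(x) = ∏_P (1 − x/|P|)^{−1}(1 − 1/|P|)^x ≥ 1 + (x−1)/(2q) ≥ 1`,
the product over monic irreducible polynomials `P` over the field with `q` elements,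
where `|P| = q^{deg P}`. -/
theorem hq_lower_bound (F : Type*) [Field F] [Fintype F] (x : ℝ)
    (hq2 : 2 ≤ Fintype.card F) (hx1 : 1 ≤ x) (hxq : x < Fintype.card F) :
    1 + (x - 1) / (2 * Fintype.card F)
        ≤ (∏' P : {f : F[X] // f.Monic ∧ Irreducible f},
            (1 - x / (Fintype.card F : ℝ) ^ P.1.natDegree)⁻¹ *
              (1 - 1 / (Fintype.card F : ℝ) ^ P.1.natDegree) ^ x) ∧
      1 ≤ (∏' P : {f : F[X] // f.Monic ∧ Irreducible f},
            (1 - x / (Fintype.card F : ℝ) ^ P.1.natDegree)⁻¹ *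
              (1 - 1 / (Fintype.card F : ℝ) ^ P.1.natDegree) ^ x) :=
  hq_lower_bound_general F x hx1 hxq
end

section
/- Let n ≥ k > 1 be integers, r = (k−1)/log n, and let β be the circle |z| = r in C oriented counterclockwise. Then the contour integral ∮_β (z − r) n^{z−1} / z^k dz = 0. -/
open Complex Metric

theorem hasDerivAt_cpow_sub_one_mul_zpow {b z : ℂ} (hb : b ≠ 0) (hz : z ≠ 0) (m : ℤ) :
    HasDerivAt (fun w => b ^ (w - 1) * w ^ m) (b ^ (z - 1) * z ^ (m - 1) * (z * log b + m)) z := by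
  have hpow : HasDerivAt (fun w => b ^ (w - 1)) (b ^ (z - 1) * log b) z := by
    simpa using ((hasDerivAt_id z).sub_const 1).const_cpow (Or.inl hb)
  refine (hpow.mul (hasDerivAt_zpow m z (Or.inl hz))).congr_deriv ?_
  rw [show z ^ m = z ^ (m - 1) * z by rw [← zpow_add_one₀ hz, sub_add_cancel]]
  ring

/-- The integrand has the primitive `b ^ (z - 1) * z ^ (1 - k) / log b` on `ℂ ∖ {0}`. -/
theorem circleIntegral_sub_mul_cpow_div_pow_eq_zero {b c : ℂ} {R : ℝ} (hb : log b ≠ 0)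
    (h0 : (0 : ℂ) ∉ sphere c |R|) (k : ℕ) :
    (∮ z in C(c, R), (z - (k - 1) / log b) * b ^ (z - 1) / z ^ k) = 0 := by
  have hb0 : b ≠ 0 := by rintro rfl; simp at hb
  refine circleIntegral.integral_eq_zero_of_hasDerivWithinAt'
    (f := fun z => b ^ (z - 1) * z ^ (1 - k : ℤ) / log b) fun z hz => ?_
  have hz0 : z ≠ 0 := by rintro rfl; exact h0 hz
  convert ((hasDerivAt_cpow_sub_one_mul_zpow hb0 hz0 (1 - k)).div_const (log b)).hasDerivWithinAt
    using 1
  rw [sub_sub_cancel_left, zpow_neg, zpow_natCast]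
  push_cast
  field_simp
  ring

/-- For integers `n ≥ k > 1` and `r = (k−1)/log n`, the contour integral over the
circle `|z| = r` of `(z − r) n^{z−1}/z^k` vanishes. -/
theorem contour_integral_vanishes (n k : ℕ) (hk : 1 < k) (hkn : k ≤ n) :
    (∮ z in C(0, ((k : ℝ) - 1) / Real.log n),
        (z - (((k : ℝ) - 1) / Real.log n : ℝ)) * (n : ℂ) ^ (z - 1) / z ^ k) = 0 := by
  have hlog : 0 < Real.log n := Real.log_pos (by exact_mod_cast hk.trans_le hkn)
  have hR : 0 < ((k : ℝ) - 1) / Real.log n :=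
    div_pos (sub_pos.2 (by exact_mod_cast hk)) hlog
  have hlogC : log (n : ℂ) = Real.log n := (natCast_log).symm
  have h0 : (0 : ℂ) ∉ sphere 0 |((k : ℝ) - 1) / Real.log n| := by
    simpa [abs_of_pos hR] using hR.ne
  convert circleIntegral_sub_mul_cpow_div_pow_eq_zero (b := n)
    (by rw [hlogC]; exact_mod_cast hlog.ne') h0 k using 4
  push_cast
  rw [hlogC]
end

section
/- Let n ≥ k > 1 be integers, r = (k−1)/log n, β the circle |z| = r oriented counterclockwise, and let X be a Poisson random variable with mean log n. Then for each integer j ≥ 0 there is a constant C_j such that ∮_β |(z−r)^j n^{z−1} / z^k| |dz| ≤ C_j · P(X = k−1) · (√k / log n)^j. -/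
/-!
On the circle `z = r e^{it}` with `r log n = m := k - 1` one has
`|n^{z-1}| = e^m n⁻¹ e^{-m(1 - cos t)}` and `|z - r|² = 2r²(1 - cos t)`. Half of the factor
`e^{-m(1 - cos t)}` absorbs `|e^{it} - 1|^j` at the price `m^{-j/2}`, and the other half
integrates to `O(m^{-1/2})` because `1 - cos t ≥ 2t²/π²` on `[-π, π]`. Stirling's bound
`m! e^m ≤ e √m m^m` then turns `e^m r^{j+1-k}` into the Poisson mass `(log n)^m / m!`.
-/

open Real Nat

lemma pow_mul_exp_neg_sq_div_four_le (j : ℕ) {y : ℝ} (hy : 0 ≤ y) :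
    y ^ j * exp (-(y ^ 2 / 4)) ≤ j ! * exp 1 := by
  have hy' : y ≤ 1 + y ^ 2 / 4 := by nlinarith [sq_nonneg (y - 2)]
  have hfac : (1 + y ^ 2 / 4) ^ j ≤ j ! * exp (1 + y ^ 2 / 4) := by
    have := pow_div_factorial_le_exp (x := 1 + y ^ 2 / 4) (by positivity) j
    rwa [div_le_iff₀' (by positivity)] at this
  calc y ^ j * exp (-(y ^ 2 / 4))
      ≤ j ! * exp (1 + y ^ 2 / 4) * exp (-(y ^ 2 / 4)) := by
        gcongr
        exact (pow_le_pow_left₀ hy hy' j).trans hfac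
    _ = j ! * exp 1 := by rw [mul_assoc, ← exp_add]; ring_nf

lemma sqrt_pow_mul_exp_neg_mul_le (j : ℕ) {m u : ℝ} (hm : 0 < m) (hu : 0 ≤ u) :
    √(2 * u) ^ j * exp (-(m * u)) ≤ j ! * exp 1 / √m ^ j * exp (-(m / 2 * u)) := by
  have hsm : 0 < √m := sqrt_pos.2 hm
  have hy := pow_mul_exp_neg_sq_div_four_le j (by positivity : 0 ≤ √m * √(2 * u))
  have hsq : (√m * √(2 * u)) ^ 2 / 4 = m / 2 * u := by
    rw [mul_pow, sq_sqrt hm.le, sq_sqrt (by positivity)]; ring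
  rw [hsq] at hy
  calc √(2 * u) ^ j * exp (-(m * u))
      = √(2 * u) ^ j * exp (-(m / 2 * u)) * exp (-(m / 2 * u)) := by
        rw [mul_assoc, ← exp_add]; ring_nf
    _ ≤ j ! * exp 1 / √m ^ j * exp (-(m / 2 * u)) := by
        gcongr
        rw [le_div_iff₀ (pow_pos hsm j)]
        exact le_of_eq_of_le (by ring) hy

lemma exp_div_pow_mul_sqrt_le {m : ℕ} (hm : m ≠ 0) :
    exp m / (m ^ m * √m) ≤ exp 1 / m ! := by
  obtain ⟨p, rfl⟩ : ∃ p, m = p + 1 := ⟨m - 1, by omega⟩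
  have hseq : Stirling.stirlingSeq (p + 1) ≤ exp 1 / √2 :=
    Stirling.stirlingSeq_one ▸ Stirling.stirlingSeq'_antitone (Nat.zero_le p)
  rw [Stirling.stirlingSeq, div_le_iff₀ (by positivity)] at hseq
  have hfac : ((p + 1) ! : ℝ) * exp (p + 1 : ℕ)
      ≤ exp 1 * (((p + 1 : ℕ) : ℝ) ^ (p + 1) * √(p + 1 : ℕ)) := by
    calc ((p + 1) ! : ℝ) * exp (p + 1 : ℕ)
        ≤ exp 1 / √2 * (√(2 * (p + 1 : ℕ)) * (((p + 1 : ℕ) : ℝ) / exp 1) ^ (p + 1))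
          * exp (p + 1 : ℕ) := by gcongr
      _ = exp 1 * (((p + 1 : ℕ) : ℝ) ^ (p + 1) * √(p + 1 : ℕ)) := by
        rw [Real.sqrt_mul (by norm_num), div_pow, ← exp_nat_mul, mul_one]
        field_simp
  rw [div_le_div_iff₀ (by positivity) (by positivity)]
  linarith

lemma integral_exp_neg_mul_one_sub_cos_le {a : ℝ} (ha : 0 < a) :
    ∫ t in (0 : ℝ)..(2 * π), exp (-(a * (1 - cos t))) ≤ √(π ^ 3 / (2 * a)) := by
  set f : ℝ → ℝ := fun t ↦ exp (-(a * (1 - cos t)))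
  set b : ℝ := 2 * a / π ^ 2 with hb_def
  have hb : 0 < b := by positivity
  have hper : Function.Periodic f (2 * π) := fun t ↦ by simp [f, cos_add_two_pi]
  have hshift : ∫ t in (0 : ℝ)..(2 * π), f t = ∫ t in (-π)..π, f t := by
    simpa [two_mul, ← sub_eq_add_neg] using hper.intervalIntegral_add_eq 0 (-π)
  have hcomp : ∀ t ∈ Set.Icc (-π) π, f t ≤ exp (-b * t ^ 2) := fun t ht ↦ by
    have := cos_le_one_sub_mul_cos_sq (abs_le.2 ht)
    simp only [f, b, exp_le_exp]
    have : 0 ≤ a * (1 - cos t - 2 / π ^ 2 * t ^ 2) := mul_nonneg ha.le (by linarith)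
    linarith [show -(2 * a / π ^ 2) * t ^ 2 = -(a * (2 / π ^ 2 * t ^ 2)) by ring]
  have hg := integrable_exp_neg_mul_sq hb
  calc ∫ t in (0 : ℝ)..(2 * π), f t
      = ∫ t in (-π)..π, f t := hshift
    _ ≤ ∫ t in (-π)..π, exp (-b * t ^ 2) :=
        intervalIntegral.integral_mono_on (by linarith [pi_pos])
          (by apply Continuous.intervalIntegrable; fun_prop) hg.intervalIntegrable hcomp
    _ ≤ ∫ t, exp (-b * t ^ 2) := by
        rw [intervalIntegral.integral_of_le (by linarith [pi_pos])]
        exact MeasureTheory.setIntegral_le_integral hg (.of_forall fun _ ↦ (exp_pos _).le)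
    _ = √(π ^ 3 / (2 * a)) := by
        rw [integral_gaussian, hb_def]; congr 1; field_simp
noncomputable def circleIntegrand (x r : ℝ) (j k : ℕ) (t : ℝ) : ℂ :=
  ((r : ℂ) * Complex.exp (t * Complex.I) - r) ^ j
    * (x : ℂ) ^ ((r : ℂ) * Complex.exp (t * Complex.I) - 1)
    / ((r : ℂ) * Complex.exp (t * Complex.I)) ^ k

lemma norm_exp_mul_I_sub_one (t : ℝ) :
    ‖Complex.exp (t * Complex.I) - 1‖ = √(2 * (1 - cos t)) := by
  rw [← Real.sqrt_sq (norm_nonneg _), Complex.sq_norm, Complex.normSq_apply]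
  congr 1
  simp only [Complex.sub_re, Complex.sub_im, Complex.exp_ofReal_mul_I_re,
    Complex.exp_ofReal_mul_I_im, Complex.one_re, Complex.one_im]
  nlinarith [sin_sq_add_cos_sq t]

lemma norm_circleIntegrand {x r : ℝ} (hx : 0 < x) (hr : 0 ≤ r) (j k : ℕ) (t : ℝ) :
    ‖circleIntegrand x r j k t‖
      = (r * √(2 * (1 - cos t))) ^ j * exp ((r * cos t - 1) * log x) / r ^ k := by
  have hz : ‖(r : ℂ) * Complex.exp (t * Complex.I)‖ = r := by
    rw [norm_mul, Complex.norm_exp_ofReal_mul_I, Complex.norm_of_nonneg hr, mul_one]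
  have hsub : (r : ℂ) * Complex.exp (t * Complex.I) - r
      = r * (Complex.exp (t * Complex.I) - 1) := by ring
  rw [circleIntegrand, norm_div, norm_mul, norm_pow, norm_pow, hz, hsub, norm_mul,
    Complex.norm_of_nonneg hr, norm_exp_mul_I_sub_one, Complex.norm_cpow_eq_rpow_re_of_pos hx,
    rpow_def_of_pos hx, mul_comm (log x)]
  simp [Complex.exp_ofReal_mul_I_re]

lemma norm_circleIntegrand_mul_le (j k : ℕ) {x m : ℝ} (hx : 1 < x) (hm : 0 < m) (t : ℝ) :
    ‖circleIntegrand x (m / log x) j k t‖ * (m / log x)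
      ≤ (m / log x) ^ (j + 1) / (m / log x) ^ k * (exp m / x) * (j ! * exp 1 / √m ^ j)
        * exp (-(m / 2 * (1 - cos t))) := by
  have hL : 0 < log x := log_pos hx
  set r := m / log x
  have hr : 0 < r := by positivity
  have hexp : exp ((r * cos t - 1) * log x) = exp m / x * exp (-(m * (1 - cos t))) := by
    rw [div_eq_mul_inv, ← exp_log (zero_lt_one.trans hx), ← exp_neg, log_exp, ← exp_add,
      ← exp_add]
    congr 1
    have : r * log x = m := div_mul_cancel₀ m hL.ne'
    linear_combination cos t * this
  rw [norm_circleIntegrand (zero_lt_one.trans hx) hr.le]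
  calc (r * √(2 * (1 - cos t))) ^ j * exp ((r * cos t - 1) * log x) / r ^ k * r
      = r ^ (j + 1) / r ^ k * (exp m / x)
          * (√(2 * (1 - cos t)) ^ j * exp (-(m * (1 - cos t)))) := by
        rw [hexp, mul_pow]; ring
    _ ≤ r ^ (j + 1) / r ^ k * (exp m / x)
          * (j ! * exp 1 / √m ^ j * exp (-(m / 2 * (1 - cos t)))) := by
        gcongr _ * ?_
        exact sqrt_pow_mul_exp_neg_mul_le j hm (sub_nonneg.2 (cos_le_one t))
    _ = _ := by ring

lemma integral_norm_circleIntegrand_mul_le (j k : ℕ) {x m : ℝ} (hx : 1 < x) (hm : 0 < m) :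
    ∫ t in (0 : ℝ)..(2 * π), ‖circleIntegrand x (m / log x) j k t‖ * (m / log x)
      ≤ (m / log x) ^ (j + 1) / (m / log x) ^ k * (exp m / x) * (j ! * exp 1 / √m ^ j)
        * √(π ^ 3 / m) := by
  have hr : 0 ≤ m / log x := div_nonneg hm.le (log_pos hx).le
  have hcont : Continuous fun t ↦ ‖circleIntegrand x (m / log x) j k t‖ * (m / log x) := by
    simp_rw [norm_circleIntegrand (zero_lt_one.trans hx) hr]
    fun_prop
  have hgauss := integral_exp_neg_mul_one_sub_cos_le (half_pos hm)
  rw [show 2 * (m / 2) = m by ring] at hgauss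
  calc _ ≤ ∫ t in (0 : ℝ)..(2 * π), (m / log x) ^ (j + 1) / (m / log x) ^ k * (exp m / x)
          * (j ! * exp 1 / √m ^ j) * exp (-(m / 2 * (1 - cos t))) :=
        intervalIntegral.integral_mono_on two_pi_pos.le (hcont.intervalIntegrable _ _)
          (by apply Continuous.intervalIntegrable; fun_prop)
          fun t _ ↦ norm_circleIntegrand_mul_le j k hx hm t
    _ ≤ _ := by
        rw [intervalIntegral.integral_const_mul]
        gcongr

lemma circle_bound_le_poisson_mass (j : ℕ) {m : ℕ} (hm : m ≠ 0) {x L : ℝ} (hx : 0 < x)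
    (hL : 0 < L) :
    (m / L) ^ (j + 1) / (m / L) ^ (m + 1) * (exp m / x) * (j ! * exp 1 / √m ^ j) * √(π ^ 3 / m)
      ≤ j ! * exp 1 ^ 2 * √(π ^ 3) * (L ^ m / (x * m !)) * (√(m + 1) / L) ^ j := by
  have hm0 : (0 : ℝ) < m := by positivity
  calc _ = j ! * exp 1 * √(π ^ 3) * (√m / L) ^ j * (L ^ m / x) * (exp m / (m ^ m * √m)) := by
        rw [sqrt_div' _ hm0.le]
        set s := √m
        have hs0 : 0 < s := sqrt_pos.2 hm0
        have hL0 : L ≠ 0 := hL.ne'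
        rw [show (m : ℝ) = s ^ 2 from (sq_sqrt hm0.le).symm]
        simp only [div_pow]
        field_simp
        ring
    _ ≤ j ! * exp 1 * √(π ^ 3) * (√(m + 1) / L) ^ j * (L ^ m / x) * (exp 1 / m !) := by
        gcongr j ! * exp 1 * √(π ^ 3) * (√?_ / L) ^ j * (L ^ m / x) * ?_
        · linarith
        · exact exp_div_pow_mul_sqrt_le hm
    _ = _ := by ring

/-- For `n ≥ k > 1`, `r = (k−1)/log n`, `β` the circle `|z| = r`, `X` Poisson with
mean `log n`: for each `j ≥ 0`,
`∮_β |(z−r)^j n^{z−1}/z^k| |dz| ≤ C_j P(X = k−1) (√k/log n)^j`, where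
`P(X = k−1) = n^{−1} (log n)^{k−1}/(k−1)!`. -/
theorem arc_length_integral_bound (j : ℕ) :
    ∃ C : ℝ, 0 < C ∧ ∀ n k : ℕ, 1 < k → k ≤ n →
      (∫ t in (0 : ℝ)..(2 * π),
          norm
            (((((k : ℝ) - 1) / Real.log n : ℝ) * Complex.exp (t * Complex.I)
                  - (((k : ℝ) - 1) / Real.log n : ℝ)) ^ j
              * (n : ℂ) ^ ((((k : ℝ) - 1) / Real.log n : ℝ) * Complex.exp (t * Complex.I) - 1)
              / ((((k : ℝ) - 1) / Real.log n : ℝ) * Complex.exp (t * Complex.I)) ^ k)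
            * (((k : ℝ) - 1) / Real.log n))
        ≤ C * ((Real.log n) ^ (k - 1) / (n * (k - 1).factorial))
            * (Real.sqrt k / Real.log n) ^ j := by
  refine ⟨j ! * exp 1 ^ 2 * √(π ^ 3), by positivity, fun n k hk hkn ↦ ?_⟩
  obtain ⟨m, rfl⟩ : ∃ m, k = m + 1 := ⟨k - 1, by omega⟩
  have hm : m ≠ 0 := by omega
  have hn : (1 : ℝ) < n := by exact_mod_cast hk.trans_le hkn
  rw [Nat.cast_succ, add_sub_cancel_right, Nat.add_sub_cancel, ← Complex.ofReal_natCast n]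
  exact (integral_norm_circleIntegrand_mul_le j (m + 1) hn (by positivity)).trans
    (circle_bound_le_poisson_mass j hm (by linarith) (log_pos hn))
end

section
/- For n ≥ 2 and a prime power q, the contribution of k = n to the total variation distance between the cycle-count and prime-factor-count distributions satisfies P(Ω(f_{n,q}) = n) − P(K(π_n) = n) = (1/n!)(∏_{i=1}^{n−1}(1 + i/q) − 1) ≥ (1/q)·(1/n!)·binom(n,2). In particular P(Ω(f_{n,q})=n) = binom(q+n−1, n)/q^n and P(K(π_n)=n) = 1/n!. -/
/-!
A monic polynomial of degree `n` has `n` irreducible factors (with multiplicity) exactly when it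
splits into linear factors, so these polynomials correspond to their multisets of `n` roots,
of which there are `binom(q+n-1, n)`. A permutation of `n` points with `n` cycles is the identity,
since every nontrivial cycle has length at least `2`. The identity is then
`n! binom(q+n-1, n) = q (q+1) ⋯ (q+n-1)`, and the bound is `1 + ∑ xᵢ ≤ ∏ (1 + xᵢ)` for `xᵢ = i/q`,
together with `∑_{i<n} i = binom(n, 2)`.
-/

open Polynomial

/-- The number of cycles of a permutation, counting fixed points as cycles. -/
noncomputable def cycleCount {α : Type*} [Fintype α] [DecidableEq α] (π : Equiv.Perm α) : ℕ :=
  π.cycleType.card + (Fintype.card α - π.support.card)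

open Finset UniqueFactorizationMonoid

section Permutations

variable {α : Type*} [Fintype α] [DecidableEq α]

theorem cycleCount_eq_card_iff {π : Equiv.Perm α} : cycleCount π = Fintype.card α ↔ π = 1 := by
  have h_cycles : 2 * π.cycleType.card ≤ #π.support := by
    rw [← π.sum_cycleType, mul_comm, ← smul_eq_mul]
    exact Multiset.card_nsmul_le_sum fun _ ↦ Equiv.Perm.two_le_of_mem_cycleType
  have h_support : #π.support ≤ Fintype.card α := card_le_univ _
  rw [← Equiv.Perm.support_eq_empty_iff, ← card_eq_zero, cycleCount]
  omega

theorem card_cycleCount_eq_card :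
    Nat.card {π : Equiv.Perm α // cycleCount π = Fintype.card α} = 1 := by
  rw [Nat.card_congr (Equiv.subtypeEquivRight fun _ ↦ cycleCount_eq_card_iff), Nat.card_unique]

end Permutations

theorem Multiset.card_eq_sum_iff_forall_eq_one {s : Multiset ℕ} (hs : ∀ x ∈ s, 1 ≤ x) :
    Multiset.card s = s.sum ↔ ∀ x ∈ s, x = 1 := by
  induction s using Multiset.induction_on with
  | empty => simp
  | cons a s ih =>
    have ha := hs a (Multiset.mem_cons_self a s)
    have hs' := fun x hx ↦ hs x (Multiset.mem_cons_of_mem hx)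
    have h_le : Multiset.card s ≤ s.sum := by
      simpa using Multiset.card_nsmul_le_sum hs'
    rw [Multiset.card_cons, Multiset.sum_cons, Multiset.forall_mem_cons, ← ih hs']
    omega

namespace Polynomial

variable {F : Type*} [Field F]

theorem monic_multiset_prod_X_sub_C (s : Multiset F) : (s.map (X - C ·)).prod.Monic :=
  monic_multiset_prod_of_monic _ _ fun a _ ↦ monic_X_sub_C a

theorem sum_natDegree_factors {f : F[X]} (hf : f ≠ 0) :
    ((factors f).map natDegree).sum = f.natDegree := by
  rw [← natDegree_multiset_prod _ fun h ↦ (irreducible_of_factor 0 h).ne_zero rfl]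
  exact natDegree_eq_of_degree_eq (degree_eq_degree_of_associated (factors_prod hf))

theorem card_factors_eq_natDegree_iff_splits {f : F[X]} (hf : f ≠ 0) :
    Multiset.card (factors f) = f.natDegree ↔ Splits f := by
  rw [← sum_natDegree_factors hf, ← Multiset.card_map natDegree,
    Multiset.card_eq_sum_iff_forall_eq_one (Multiset.forall_mem_map_iff.2 fun g hg ↦
      (irreducible_of_factor g hg).natDegree_pos), Multiset.forall_mem_map_iff]
  constructor
  · intro h
    obtain ⟨u, hu⟩ := factors_prod hf
    rw [← hu]
    exact (Splits.multisetProd fun g hg ↦ Splits.of_natDegree_eq_one (h g hg)).mul u.isUnit.splits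
  · intro h g hg
    exact (h.of_dvd hf (dvd_of_mem_factors hg)).natDegree_eq_one_of_irreducible
      (irreducible_of_factor g hg)

theorem card_factors_multiset_prod_X_sub_C (s : Multiset F) :
    Multiset.card (factors (s.map (X - C ·)).prod) = Multiset.card s := by
  rw [(card_factors_eq_natDegree_iff_splits (monic_multiset_prod_X_sub_C s).ne_zero).2
    (Splits.multisetProd fun _ hg ↦ ?_), natDegree_multiset_prod_X_sub_C_eq_card]
  obtain ⟨a, -, rfl⟩ := Multiset.mem_map.1 hg
  exact Splits.X_sub_C a

theorem Monic.splits_of_card_factors_eq_natDegree {f : F[X]} (hf : f.Monic)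
    (h : Multiset.card (factors f) = f.natDegree) : Splits f :=
  (card_factors_eq_natDegree_iff_splits hf.ne_zero).1 h

noncomputable def monicSplitsEquivSym (n : ℕ) :
    {f : F[X] // f.Monic ∧ f.natDegree = n ∧ Multiset.card (factors f) = n} ≃ Sym F n where
  toFun f := ⟨f.1.roots, by
    obtain ⟨f, hm, hd, hc⟩ := f
    rw [← (hm.splits_of_card_factors_eq_natDegree (hc.trans hd.symm)).natDegree_eq_card_roots,
      hd]⟩
  invFun s := ⟨(s.1.map (X - C ·)).prod, monic_multiset_prod_X_sub_C s.1,
    by rw [natDegree_multiset_prod_X_sub_C_eq_card, s.2],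
    by rw [card_factors_multiset_prod_X_sub_C, s.2]⟩
  left_inv f := by
    obtain ⟨f, hm, hd, hc⟩ := f
    exact Subtype.ext
      ((hm.splits_of_card_factors_eq_natDegree (hc.trans hd.symm)).eq_prod_roots_of_monic hm).symm
  right_inv s := Subtype.ext (roots_multiset_prod_X_sub_C s.1)

theorem card_monic_card_factors_eq_natDegree [Fintype F] (n : ℕ) :
    Nat.card {f : F[X] // f.Monic ∧ f.natDegree = n ∧ Multiset.card (factors f) = n} =
      (Fintype.card F + n - 1).choose n := by
  classical
  rw [Nat.card_congr (monicSplitsEquivSym n), Nat.card_eq_fintype_card, Sym.card_sym_eq_choose]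

end Polynomial

theorem Finset.prod_Icc_one_sub_one_eq_prod_range {M : Type*} [CommMonoid M] {f : ℕ → M}
    (hf : f 0 = 1) (n : ℕ) : ∏ i ∈ Icc 1 (n - 1), f i = ∏ i ∈ range n, f i := by
  cases n with
  | zero => simp
  | succ n =>
    rw [prod_range_succ', hf, mul_one, ← Ico_add_one_right_eq_Icc, prod_Ico_eq_prod_range]
    simp [add_comm]

theorem one_add_sum_le_prod_one_add {ι R : Type*} [CommSemiring R] [PartialOrder R]
    [IsOrderedRing R] {f : ι → R} (s : Finset ι) (hf : ∀ i ∈ s, 0 ≤ f i) :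
    1 + ∑ i ∈ s, f i ≤ ∏ i ∈ s, (1 + f i) := by
  induction s using Finset.cons_induction with
  | empty => simp
  | cons a s ha ih =>
    rw [sum_cons, prod_cons]
    have ha := hf a (mem_cons_self a s)
    have hs := fun i hi ↦ hf i (mem_cons_of_mem hi)
    calc 1 + (f a + ∑ i ∈ s, f i)
        ≤ 1 + (f a + ∑ i ∈ s, f i) + f a * ∑ i ∈ s, f i :=
          le_add_of_nonneg_right (mul_nonneg ha (sum_nonneg hs))
      _ = (1 + f a) * (1 + ∑ i ∈ s, f i) := by ring
      _ ≤ (1 + f a) * ∏ i ∈ s, (1 + f i) :=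
          mul_le_mul_of_nonneg_left (ih hs) (add_nonneg zero_le_one ha)

theorem choose_add_sub_one_div_pow {K : Type*} [Field K] [CharZero K] {q : ℕ} (hq : q ≠ 0)
    (n : ℕ) :
    ((q + n - 1).choose n : K) / q ^ n = (∏ i ∈ range n, (1 + i / q : K)) / n.factorial := by
  have h_asc : (n.factorial * (q + n - 1).choose n : K) = ∏ i ∈ range n, ((q : K) + i) := by
    exact_mod_cast (Nat.ascFactorial_eq_factorial_mul_choose' q n).symm.trans
      (Nat.ascFactorial_eq_prod_range q n)
  have hq' : (q : K) ≠ 0 := by exact_mod_cast hq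
  have h_prod :
      ∏ i ∈ range n, (1 + i / q : K) = (∏ i ∈ range n, ((q : K) + i)) / q ^ n := by
    simp_rw [one_add_div hq']
    rw [prod_div_distrib, prod_const, card_range]
  rw [h_prod, ← h_asc, mul_div_assoc,
    mul_div_cancel_left₀ _ (Nat.cast_ne_zero.2 n.factorial_ne_zero)]

theorem choose_two_div_le_prod_one_add_div_sub_one {K : Type*} [Field K] [LinearOrder K]
    [IsStrictOrderedRing K] {q : K} (hq : 0 ≤ q) (n : ℕ) :
    (n.choose 2 : K) / q ≤ ∏ i ∈ range n, (1 + i / q) - 1 := by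
  have h_sum : ∑ i ∈ range n, (i / q : K) = n.choose 2 / q := by
    rw [← sum_div, ← Nat.cast_sum, sum_range_id, Nat.choose_two_right]
  rw [← h_sum, le_sub_iff_add_le']
  exact one_add_sum_le_prod_one_add _ fun i _ ↦ by positivity

theorem k_eq_n_contribution_general (F : Type*) [Field F] [Fintype F] (n : ℕ) :
    ((Nat.card {f : F[X] // f.Monic ∧ f.natDegree = n ∧
            Multiset.card (UniqueFactorizationMonoid.factors f) = n} : ℝ)
          / (Fintype.card F : ℝ) ^ n
        - (Nat.card {π : Equiv.Perm (Fin n) // cycleCount π = n} : ℝ) / n.factorial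
      = (1 / n.factorial) *
          ((∏ i ∈ Finset.Icc 1 (n - 1), (1 + (i : ℝ) / Fintype.card F)) - 1)) ∧
    ((1 / (Fintype.card F : ℝ)) * (1 / n.factorial) * n.choose 2
      ≤ (1 / n.factorial) *
          ((∏ i ∈ Finset.Icc 1 (n - 1), (1 + (i : ℝ) / Fintype.card F)) - 1)) ∧
    ((Nat.card {f : F[X] // f.Monic ∧ f.natDegree = n ∧
            Multiset.card (UniqueFactorizationMonoid.factors f) = n} : ℝ)
          / (Fintype.card F : ℝ) ^ n
      = (Fintype.card F + n - 1).choose n / (Fintype.card F : ℝ) ^ n) ∧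
    ((Nat.card {π : Equiv.Perm (Fin n) // cycleCount π = n} : ℝ) / n.factorial
      = 1 / n.factorial) := by
  have h_perm : Nat.card {π : Equiv.Perm (Fin n) // cycleCount π = n} = 1 := by
    simpa using card_cycleCount_eq_card (α := Fin n)
  rw [h_perm, card_monic_card_factors_eq_natDegree,
    prod_Icc_one_sub_one_eq_prod_range (by simp), Nat.cast_one]
  refine ⟨?_, ?_, rfl, rfl⟩
  · rw [choose_add_sub_one_div_pow Fintype.card_ne_zero]
    ring
  · have h_le :=
      choose_two_div_le_prod_one_add_div_sub_one (K := ℝ) (Fintype.card F).cast_nonneg n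
    calc 1 / (Fintype.card F : ℝ) * (1 / n.factorial) * n.choose 2
        = 1 / n.factorial * (n.choose 2 / Fintype.card F) := by ring
      _ ≤ _ := by gcongr

/-- Contribution of `k = n`:
`P(Ω(f_{n,q}) = n) − P(K(π_n) = n) = (1/n!)(∏_{i=1}^{n−1}(1 + i/q) − 1)
 ≥ (1/q)(1/n!) binom(n,2)`, with `P(Ω(f_{n,q}) = n) = binom(q+n−1,n)/q^n` and
`P(K(π_n) = n) = 1/n!`. -/
theorem k_eq_n_contribution (F : Type*) [Field F] [Fintype F] (n : ℕ) (hn : 2 ≤ n) :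
    ((Nat.card {f : F[X] // f.Monic ∧ f.natDegree = n ∧
            Multiset.card (UniqueFactorizationMonoid.factors f) = n} : ℝ)
          / (Fintype.card F : ℝ) ^ n
        - (Nat.card {π : Equiv.Perm (Fin n) // cycleCount π = n} : ℝ) / n.factorial
      = (1 / n.factorial) *
          ((∏ i ∈ Finset.Icc 1 (n - 1), (1 + (i : ℝ) / Fintype.card F)) - 1)) ∧
    ((1 / (Fintype.card F : ℝ)) * (1 / n.factorial) * n.choose 2
      ≤ (1 / n.factorial) *
          ((∏ i ∈ Finset.Icc 1 (n - 1), (1 + (i : ℝ) / Fintype.card F)) - 1)) ∧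
    ((Nat.card {f : F[X] // f.Monic ∧ f.natDegree = n ∧
            Multiset.card (UniqueFactorizationMonoid.factors f) = n} : ℝ)
          / (Fintype.card F : ℝ) ^ n
      = (Fintype.card F + n - 1).choose n / (Fintype.card F : ℝ) ^ n) ∧
    ((Nat.card {π : Equiv.Perm (Fin n) // cycleCount π = n} : ℝ) / n.factorial
      = 1 / n.factorial) :=
  k_eq_n_contribution_general F n
end
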